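/- arXiv:2009.06776 — 3 statements merged into one kernel-verified Lean document; each statement's English description precedes it below -/
import Mathlib

section
/- Let ψ, φ be unit vectors in ℂ^d, δ ∈ [0,1], and set a = |⟨ψ|φ⟩|. If a > √δ, then the minimum of ⟨φ|Ω|φ⟩ over all Hermitian operators Ω with 0 ≤ Ω ≤ I and ⟨ψ|Ω|ψ⟩ ≥ 1 − δ equals (a√(1−δ) − √(1−a²)·√δ)². -/
/-!
Write `p = ⟨ψ|Ω|ψ⟩` and `q = ⟨φ|Ω|φ⟩`. Splitting `⟨ψ|φ⟩ = ⟨ψ|Ω|φ⟩ + ⟨ψ|1 - Ω|φ⟩` and applying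
Cauchy–Schwarz to the positive semidefinite forms `Ω` and `1 - Ω` gives
`a ≤ √p √q + √(1 - p) √(1 - q)`: the unit vectors `(√p, √(1 - p))` and `(√q, √(1 - q))` of the
plane make an angle of cosine at least `a`, which together with `p ≥ 1 - δ` forces
`√q ≥ a √(1 - δ) - √(1 - a²) √δ`. After a phase change making `⟨ψ|φ⟩ = a` real, the bound is
attained by `Ω = |χ⟩⟨χ|` for a vector `χ` of norm at most one in the span of `ψ` and `φ` with
`⟨ψ|χ⟩ = √(1 - δ)` and `⟨φ|χ⟩ = a √(1 - δ) - √(1 - a²) √δ`.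
-/

open Matrix
open scoped ComplexOrder

variable {n : Type*} [Fintype n]

namespace Matrix

lemma norm_star_dotProduct_le (u v : n → ℂ) :
    ‖star u ⬝ᵥ v‖ ≤ √(star u ⬝ᵥ u).re * √(star v ⬝ᵥ v).re := by
  have hnorm (w : n → ℂ) : ‖WithLp.toLp 2 w‖ = √(star w ⬝ᵥ w).re := by
    rw [norm_eq_sqrt_re_inner (𝕜 := ℂ), EuclideanSpace.inner_toLp_toLp, dotProduct_comm]; rfl
  have h := norm_inner_le_norm (𝕜 := ℂ) (WithLp.toLp 2 u) (WithLp.toLp 2 v)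
  rwa [hnorm, hnorm, EuclideanSpace.inner_toLp_toLp, dotProduct_comm] at h

open scoped MatrixOrder in
lemma PosSemidef.norm_star_dotProduct_mulVec_le {Ω : Matrix n n ℂ} (hΩ : Ω.PosSemidef)
    (x y : n → ℂ) :
    ‖star x ⬝ᵥ (Ω *ᵥ y)‖ ≤
      √(star x ⬝ᵥ (Ω *ᵥ x)).re * √(star y ⬝ᵥ (Ω *ᵥ y)).re := by
  classical
  obtain ⟨B, rfl⟩ := CStarAlgebra.nonneg_iff_eq_star_mul_self.mp hΩ.nonneg
  have hform (u v : n → ℂ) : star u ⬝ᵥ ((star B * B) *ᵥ v) = star (B *ᵥ u) ⬝ᵥ (B *ᵥ v) := by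
    rw [← mulVec_mulVec, dotProduct_mulVec, star_eq_conjTranspose, star_mulVec]
  simpa only [hform] using norm_star_dotProduct_le (B *ᵥ x) (B *ᵥ y)

lemma star_smul_dotProduct_mulVec_smul (Ω : Matrix n n ℂ) {c : ℂ} (hc : ‖c‖ = 1) (x : n → ℂ) :
    star (c • x) ⬝ᵥ (Ω *ᵥ (c • x)) = star x ⬝ᵥ (Ω *ᵥ x) := by
  have hcc : star c * c = 1 := by
    rw [Complex.star_def, mul_comm, Complex.mul_conj, Complex.normSq_eq_norm_sq, hc]; simp
  rw [star_smul, mulVec_smul, smul_dotProduct, dotProduct_smul, smul_smul, smul_eq_mul, hcc, one_mul]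

lemma star_dotProduct_vecMulVec_mulVec (χ x : n → ℂ) :
    star x ⬝ᵥ (vecMulVec χ (star χ) *ᵥ x) = (‖star x ⬝ᵥ χ‖ ^ 2 : ℝ) := by
  rw [vecMulVec_mulVec, dotProduct_smul, op_smul_eq_mul, star_dotProduct χ,
    Complex.star_def, Complex.mul_conj']
  push_cast; rfl



lemma re_star_dotProduct_self_nonneg (x : n → ℂ) : 0 ≤ (star x ⬝ᵥ x).re :=
  (Complex.nonneg_iff.mp (dotProduct_star_self_nonneg x)).1

lemma star_dotProduct_self_eq_re (x : n → ℂ) : star x ⬝ᵥ x = ((star x ⬝ᵥ x).re : ℂ) :=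
  Complex.eq_re_of_ofReal_le (r := 0) (by simp)

lemma posSemidef_one_sub_vecMulVec [DecidableEq n] {χ : n → ℂ} (hχ : (star χ ⬝ᵥ χ).re ≤ 1) :
    (1 - vecMulVec χ (star χ)).PosSemidef := by
  refine .of_dotProduct_mulVec_nonneg
    (isHermitian_one.sub (posSemidef_vecMulVec_self_star χ).isHermitian) fun x ↦ ?_
  have hcs : ‖star x ⬝ᵥ χ‖ ^ 2 ≤ (star x ⬝ᵥ x).re := by
    have h := pow_le_pow_left₀ (norm_nonneg _) (norm_star_dotProduct_le x χ) 2
    rw [mul_pow, Real.sq_sqrt (re_star_dotProduct_self_nonneg x),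
      Real.sq_sqrt (re_star_dotProduct_self_nonneg χ)] at h
    exact h.trans (mul_le_of_le_one_right (re_star_dotProduct_self_nonneg x) hχ)
  rw [sub_mulVec, one_mulVec, dotProduct_sub, star_dotProduct_vecMulVec_mulVec,
    star_dotProduct_self_eq_re x, ← Complex.ofReal_sub]
  exact Complex.zero_le_real.mpr (sub_nonneg.mpr hcs)

lemma star_dotProduct_one_sub_mulVec [DecidableEq n] (Ω : Matrix n n ℂ) (x y : n → ℂ) :
    star x ⬝ᵥ ((1 - Ω) *ᵥ y) = star x ⬝ᵥ y - star x ⬝ᵥ (Ω *ᵥ y) := by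
  rw [sub_mulVec, one_mulVec, dotProduct_sub]

lemma re_star_dotProduct_mulVec_mem_Icc [DecidableEq n] {Ω : Matrix n n ℂ} (hΩ : Ω.PosSemidef)
    (hΩ' : (1 - Ω).PosSemidef) {x : n → ℂ} (hx : star x ⬝ᵥ x = 1) :
    (star x ⬝ᵥ (Ω *ᵥ x)).re ∈ Set.Icc 0 1 := by
  have h := hΩ'.re_dotProduct_nonneg x
  rw [RCLike.re_to_complex, star_dotProduct_one_sub_mulVec, hx, Complex.sub_re,
    Complex.one_re] at h
  exact ⟨by simpa using hΩ.re_dotProduct_nonneg x, by linarith⟩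

lemma norm_star_dotProduct_le_of_posSemidef [DecidableEq n] {Ω : Matrix n n ℂ}
    (hΩ : Ω.PosSemidef) (hΩ' : (1 - Ω).PosSemidef) {ψ φ : n → ℂ}
    (hψ : star ψ ⬝ᵥ ψ = 1) (hφ : star φ ⬝ᵥ φ = 1) :
    ‖star ψ ⬝ᵥ φ‖ ≤ √(star ψ ⬝ᵥ (Ω *ᵥ ψ)).re * √(star φ ⬝ᵥ (Ω *ᵥ φ)).re +
      √(1 - (star ψ ⬝ᵥ (Ω *ᵥ ψ)).re) * √(1 - (star φ ⬝ᵥ (Ω *ᵥ φ)).re) := by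
  have hsplit : star ψ ⬝ᵥ φ = star ψ ⬝ᵥ (Ω *ᵥ φ) + star ψ ⬝ᵥ ((1 - Ω) *ᵥ φ) := by
    rw [star_dotProduct_one_sub_mulVec]; ring
  have h := hΩ'.norm_star_dotProduct_mulVec_le ψ φ
  rw [star_dotProduct_one_sub_mulVec Ω ψ ψ, star_dotProduct_one_sub_mulVec Ω φ φ, hψ, hφ,
    Complex.sub_re, Complex.sub_re, Complex.one_re] at h
  rw [hsplit]
  exact (norm_add_le _ _).trans (add_le_add (hΩ.norm_star_dotProduct_mulVec_le ψ φ) h)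

end Matrix

/-- `(x, y)` and `(u, v)` are unit vectors at an angle `θ` with `cos θ = x u + y v ≥ a`, and
`u = cos θ · x - sin θ · y` with `sin θ = x v - y u`. -/
lemma sub_le_of_le_mul_add_mul {a x y u v : ℝ} (hx : 0 ≤ x) (hy : 0 ≤ y)
    (hxy : x ^ 2 + y ^ 2 = 1) (huv : u ^ 2 + v ^ 2 = 1) (ha : 0 ≤ a) (h : a ≤ x * u + y * v) :
    a * x - √(1 - a ^ 2) * y ≤ u := by
  set c := x * u + y * v
  set s := x * v - y * u
  have hcs : c ^ 2 + s ^ 2 = 1 := by linear_combination (u ^ 2 + v ^ 2) * hxy + huv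
  have hs : s ≤ √(1 - a ^ 2) := Real.le_sqrt_of_sq_le (by nlinarith)
  have hu : u = c * x - s * y := by linear_combination (-u) * hxy
  nlinarith [mul_le_mul_of_nonneg_right h hx, mul_le_mul_of_nonneg_right hs hy]

lemma mul_sqrt_sub_sqrt_mul_sqrt_nonneg {a δ : ℝ} (hδ : 0 ≤ δ) (ha : √δ ≤ a) :
    0 ≤ a * √(1 - δ) - √(1 - a ^ 2) * √δ := by
  have ha0 : 0 ≤ a := (Real.sqrt_nonneg δ).trans ha
  have hδa : δ ≤ a ^ 2 := (Real.sqrt_le_left ha0).mp ha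
  have hlhs : a * √(1 - δ) = √(a ^ 2 * (1 - δ)) := by
    rw [Real.sqrt_mul (sq_nonneg a), Real.sqrt_sq ha0]
  rw [hlhs, mul_comm (√(1 - a ^ 2)), ← Real.sqrt_mul hδ, sub_nonneg]
  exact Real.sqrt_le_sqrt (by linarith)

lemma sq_mul_sqrt_sub_sqrt_mul_sqrt_le {a δ p q : ℝ} (hδ : 0 ≤ δ) (ha : √δ ≤ a)
    (hp : p ∈ Set.Icc 0 1) (hq : q ∈ Set.Icc 0 1) (hpδ : 1 - δ ≤ p)
    (h : a ≤ √p * √q + √(1 - p) * √(1 - q)) :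
    (a * √(1 - δ) - √(1 - a ^ 2) * √δ) ^ 2 ≤ q := by
  have hunit {r : ℝ} (hr : r ∈ Set.Icc 0 1) : √r ^ 2 + √(1 - r) ^ 2 = 1 := by
    rw [Real.sq_sqrt hr.1, Real.sq_sqrt (by linarith [hr.2])]; ring
  have hangle := sub_le_of_le_mul_add_mul (Real.sqrt_nonneg p) (Real.sqrt_nonneg (1 - p))
    (hunit hp) (hunit hq) ((Real.sqrt_nonneg δ).trans ha) h
  have hmono : a * √(1 - δ) - √(1 - a ^ 2) * √δ ≤ a * √p - √(1 - a ^ 2) * √(1 - p) := by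
    gcongr
    · exact (Real.sqrt_nonneg δ).trans ha
    · linarith
  calc (a * √(1 - δ) - √(1 - a ^ 2) * √δ) ^ 2 ≤ √q ^ 2 := by
        gcongr
        · exact mul_sqrt_sub_sqrt_mul_sqrt_nonneg hδ ha
        · exact hmono.trans hangle
    _ = q := Real.sq_sqrt hq.1

namespace Matrix

lemma exists_star_dotProduct_eq {ψ φ : n → ℂ} {a : ℝ} (hψ : star ψ ⬝ᵥ ψ = 1)
    (hφ : star φ ⬝ᵥ φ = 1) (hψφ : star ψ ⬝ᵥ φ = a) (s t : ℝ) :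
    ∃ χ : n → ℂ, star ψ ⬝ᵥ χ = s ∧ star φ ⬝ᵥ χ = (s * a - t * (1 - a ^ 2) : ℝ) ∧
      star χ ⬝ᵥ χ = (s ^ 2 + t ^ 2 * (1 - a ^ 2) : ℝ) := by
  have hφψ : star φ ⬝ᵥ ψ = a := by rw [star_dotProduct, hψφ, Complex.star_def, Complex.conj_ofReal]
  set χ : n → ℂ := ((s + t * a : ℝ) : ℂ) • ψ - (t : ℂ) • φ
  have hψχ : star ψ ⬝ᵥ χ = s := by
    simp only [χ, dotProduct_sub, dotProduct_smul, smul_eq_mul, hψ, hψφ]; push_cast; ring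
  have hφχ : star φ ⬝ᵥ χ = (s * a - t * (1 - a ^ 2) : ℝ) := by
    simp only [χ, dotProduct_sub, dotProduct_smul, smul_eq_mul, hφ, hφψ]; push_cast; ring
  refine ⟨χ, hψχ, hφχ, ?_⟩
  simp only [χ, star_sub, star_smul, sub_dotProduct, smul_dotProduct, smul_eq_mul, hψχ, hφχ,
    Complex.star_def, Complex.conj_ofReal]
  push_cast; ring

lemma exists_optimal_test [DecidableEq n] {ψ φ : n → ℂ} {a δ : ℝ} (hψ : star ψ ⬝ᵥ ψ = 1)
    (hφ : star φ ⬝ᵥ φ = 1) (hψφ : star ψ ⬝ᵥ φ = a) (hδ : δ ∈ Set.Icc (0 : ℝ) 1) :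
    ∃ Ω : Matrix n n ℂ, Ω.PosSemidef ∧ (1 - Ω).PosSemidef ∧
      1 - δ ≤ (star ψ ⬝ᵥ (Ω *ᵥ ψ)).re ∧
      (a * √(1 - δ) - √(1 - a ^ 2) * √δ) ^ 2 = (star φ ⬝ᵥ (Ω *ᵥ φ)).re := by
  -- For `a = 1` division by zero makes `t = 0`, and the vector `χ` below is `√(1 - δ) ψ`.
  set t := √δ / √(1 - a ^ 2)
  have ht : t * (1 - a ^ 2) = √(1 - a ^ 2) * √δ := by
    rw [div_mul_eq_mul_div, mul_div_assoc, Real.div_sqrt, mul_comm]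
  have ht2 : t ^ 2 * (1 - a ^ 2) ≤ δ := by
    calc t ^ 2 * (1 - a ^ 2) = (√δ * √δ) * (√(1 - a ^ 2) / √(1 - a ^ 2)) := by
          rw [sq, mul_assoc, ht]; ring
      _ ≤ δ := by
          rw [Real.mul_self_sqrt hδ.1]; exact mul_le_of_le_one_right hδ.1 (div_self_le_one _)
  obtain ⟨χ, hψχ, hφχ, hχχ⟩ := exists_star_dotProduct_eq hψ hφ hψφ √(1 - δ) t
  have hs : √(1 - δ) ^ 2 = 1 - δ := Real.sq_sqrt (by linarith [hδ.2])
  refine ⟨vecMulVec χ (star χ), posSemidef_vecMulVec_self_star χ,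
    posSemidef_one_sub_vecMulVec ?_, ?_, ?_⟩
  · rw [hχχ, Complex.ofReal_re]; linarith
  · rw [star_dotProduct_vecMulVec_mulVec, hψχ, Complex.ofReal_re, Complex.norm_real,
      Real.norm_eq_abs, sq_abs, hs]
  · rw [star_dotProduct_vecMulVec_mulVec, hφχ, Complex.ofReal_re, Complex.norm_real,
      Real.norm_eq_abs, sq_abs, ht, mul_comm √(1 - δ)]

end Matrix

theorem stmt1 {d : ℕ} (ψ φ : Fin d → ℂ) (δ a : ℝ)
    (hψ : star ψ ⬝ᵥ ψ = 1) (hφ : star φ ⬝ᵥ φ = 1)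
    (hδ : δ ∈ Set.Icc (0 : ℝ) 1)
    (ha : a = ‖star ψ ⬝ᵥ φ‖)
    (hover : Real.sqrt δ < a) :
    IsLeast {x : ℝ | ∃ Ω : Matrix (Fin d) (Fin d) ℂ, Ω.PosSemidef ∧ (1 - Ω).PosSemidef ∧
        1 - δ ≤ (star ψ ⬝ᵥ (Ω *ᵥ ψ)).re ∧ x = (star φ ⬝ᵥ (Ω *ᵥ φ)).re}
      ((a * Real.sqrt (1 - δ) - Real.sqrt (1 - a ^ 2) * Real.sqrt δ) ^ 2) := by
  constructor
  · obtain ⟨c, hc, hcφ⟩ := Complex.exists_norm_eq_mul_self (star ψ ⬝ᵥ φ)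
    have hψφ' : star ψ ⬝ᵥ (c • φ) = a := by rw [dotProduct_smul, smul_eq_mul, ha, hcφ]
    have hφ' : star (c • φ) ⬝ᵥ (c • φ) = 1 := by
      simpa only [one_mulVec, hφ] using star_smul_dotProduct_mulVec_smul 1 hc φ
    obtain ⟨Ω, hΩ, hΩ', hp, hq⟩ := exists_optimal_test hψ hφ' hψφ' hδ
    exact ⟨Ω, hΩ, hΩ', hp, by rw [hq, star_smul_dotProduct_mulVec_smul Ω hc]⟩
  · rintro x ⟨Ω, hΩ, hΩ', hp, rfl⟩
    exact sq_mul_sqrt_sub_sqrt_mul_sqrt_le hδ.1 (ha ▸ hover.le)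
      (re_star_dotProduct_mulVec_mem_Icc hΩ hΩ' hψ) (re_star_dotProduct_mulVec_mem_Icc hΩ hΩ' hφ)
      hp (ha ▸ norm_star_dotProduct_le_of_posSemidef hΩ hΩ' hψ hφ)
end

section
/- Let U ∈ U(d) be unitary and δ ∈ [0,1]. The quantity min over unit ψ of the minimized type II error for certifying states ψ versus Uψ with significance δ equals: 0 if ν(U) ≤ √δ, and (ν(U)√(1−δ) − √(1−ν(U)²)√δ)² if ν(U) > √δ, where ν(U) = min over unit ψ of |⟨ψ|U|ψ⟩|. -/
open Matrix
open scoped ComplexOrder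

/-- The distance from the numerical range of `U` to the origin. -/
noncomputable def nu {d : ℕ} (U : Matrix (Fin d) (Fin d) ℂ) : ℝ :=
  sInf {r : ℝ | ∃ ψ : Fin d → ℂ, star ψ ⬝ᵥ ψ = 1 ∧ r = ‖star ψ ⬝ᵥ (U *ᵥ ψ)‖}

/-!
Write `φ = Uψ` and let `a = ⟨ψ|Ω|ψ⟩`, `b = ⟨φ|Ω|φ⟩` for a test `0 ≤ Ω ≤ 1`. Splitting
`⟨ψ|φ⟩ = ⟨ψ|Ω|φ⟩ + ⟨ψ|1 - Ω|φ⟩` and applying Cauchy–Schwarz to the semi-inner products of `Ω`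
and `1 - Ω` gives `|⟨ψ|φ⟩| ≤ √(ab) + √((1 - a)(1 - b))`. With `cos θ = |⟨ψ|φ⟩|`, `cos α = √a`,
`cos β = √b` this reads `cos θ ≤ cos (α - β)`, hence `√b ≥ cos (θ + α)`. As `a ≥ 1 - δ` and
`|⟨ψ|φ⟩| ≥ ν(U)`, the type II error `b` is at least `cos (θ₀ + α₀) ^ 2`, where `cos θ₀ = ν(U)` and
`cos α₀ = √(1 - δ)`, as soon as this cosine is nonnegative, i.e. when `ν(U) > √δ`.

Both values are attained at a minimiser `ψ` of `|⟨ψ|U|ψ⟩|`, which exists by compactness of the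
unit sphere: by the rank-one test onto `ψ` turned by `α₀` away from `φ` in the plane of `ψ` and
`φ`, and, when `ν(U) ≤ √δ`, by the test `1 - |φ⟩⟨φ|`, which never accepts `φ`.
-/

namespace UnitaryCertification

section DotProduct

variable {n : Type*} [Fintype n]

lemma im_star_dotProduct_self (x : n → ℂ) : (star x ⬝ᵥ x).im = 0 :=
  (Complex.nonneg_iff.mp (dotProduct_star_self_nonneg x)).2.symm

lemma norm_sq_le_re_star_dotProduct_self (x : n → ℂ) (i : n) :
    ‖x i‖ ^ 2 ≤ (star x ⬝ᵥ x).re := by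
  have h : (star x ⬝ᵥ x).re = ∑ j, ‖x j‖ ^ 2 := by
    simp only [dotProduct, Pi.star_apply, Complex.re_sum, Complex.star_def, Complex.conj_mul']
    norm_cast
  rw [h]
  exact Finset.single_le_sum (fun j _ => sq_nonneg ‖x j‖) (Finset.mem_univ i)

lemma norm_star_dotProduct_sq_le (x y : n → ℂ) :
    ‖star x ⬝ᵥ y‖ ^ 2 ≤ (star x ⬝ᵥ x).re * (star y ⬝ᵥ y).re := by
  have h := inner_mul_inner_self_le (𝕜 := ℂ) (WithLp.toLp 2 x) (WithLp.toLp 2 y)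
  simp only [EuclideanSpace.inner_toLp_toLp, RCLike.re_to_complex] at h
  rwa [dotProduct_comm y, dotProduct_comm x (star x), dotProduct_comm x (star y),
    dotProduct_comm y, star_dotProduct y, norm_star, ← sq] at h

lemma norm_star_dotProduct_le_one {x y : n → ℂ} (hx : star x ⬝ᵥ x = 1) (hy : star y ⬝ᵥ y = 1) :
    ‖star x ⬝ᵥ y‖ ≤ 1 := by
  have h := norm_star_dotProduct_sq_le x y
  rw [hx, hy, Complex.one_re, one_mul] at h
  exact (sq_le_one_iff₀ (norm_nonneg _)).mp h

lemma isCompact_setOf_star_dotProduct_self_eq_one :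
    IsCompact {ψ : n → ℂ | star ψ ⬝ᵥ ψ = 1} := by
  refine Metric.isCompact_of_isClosed_isBounded (isClosed_eq (by fun_prop) continuous_const) ?_
  refine isBounded_iff_forall_norm_le.mpr ⟨1, fun ψ hψ => ?_⟩
  refine (pi_norm_le_iff_of_nonneg zero_le_one).mpr fun i => ?_
  have h := norm_sq_le_re_star_dotProduct_self ψ i
  rw [show star ψ ⬝ᵥ ψ = 1 from hψ, Complex.one_re] at h
  exact (sq_le_one_iff₀ (norm_nonneg _)).mp h

open scoped MatrixOrder in
lemma PosSemidef.norm_star_dotProduct_mulVec_sq_le {M : Matrix n n ℂ} (hM : M.PosSemidef)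
    (x y : n → ℂ) :
    ‖star x ⬝ᵥ (M *ᵥ y)‖ ^ 2 ≤ (star x ⬝ᵥ (M *ᵥ x)).re * (star y ⬝ᵥ (M *ᵥ y)).re := by
  classical
  obtain ⟨B, rfl⟩ := CStarAlgebra.nonneg_iff_eq_star_mul_self.mp hM.nonneg
  have hB : ∀ u v : n → ℂ, star u ⬝ᵥ ((star B * B) *ᵥ v) = star (B *ᵥ u) ⬝ᵥ (B *ᵥ v) := by
    intro u v
    rw [← mulVec_mulVec, star_mulVec, ← dotProduct_mulVec, star_eq_conjTranspose]
  simpa only [hB] using norm_star_dotProduct_sq_le (B *ᵥ x) (B *ᵥ y)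

lemma PosSemidef.norm_star_dotProduct_mulVec_le_sqrt {M : Matrix n n ℂ} (hM : M.PosSemidef)
    (x y : n → ℂ) :
    ‖star x ⬝ᵥ (M *ᵥ y)‖ ≤ √((star x ⬝ᵥ (M *ᵥ x)).re * (star y ⬝ᵥ (M *ᵥ y)).re) :=
  Real.le_sqrt_of_sq_le (PosSemidef.norm_star_dotProduct_mulVec_sq_le hM x y)

lemma star_dotProduct_vecMulVec_mulVec (ω x : n → ℂ) :
    star x ⬝ᵥ (vecMulVec ω (star ω) *ᵥ x) = Complex.normSq (star ω ⬝ᵥ x) := by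
  rw [vecMulVec_mulVec, Complex.normSq_eq_conj_mul_self, ← Complex.star_def,
    ← star_dotProduct]
  simp [dotProduct, Finset.sum_mul, mul_assoc]

lemma star_dotProduct_sub_smul_eq {ψ φ : n → ℂ} (hψ : star ψ ⬝ᵥ ψ = 1)
    (hφ : star φ ⬝ᵥ φ = 1) :
    star ψ ⬝ᵥ (φ - (star ψ ⬝ᵥ φ) • ψ) = 0 ∧
      star (φ - (star ψ ⬝ᵥ φ) • ψ) ⬝ᵥ φ = ((1 - ‖star ψ ⬝ᵥ φ‖ ^ 2 : ℝ) : ℂ) ∧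
      star (φ - (star ψ ⬝ᵥ φ) • ψ) ⬝ᵥ (φ - (star ψ ⬝ᵥ φ) • ψ) =
        ((1 - ‖star ψ ⬝ᵥ φ‖ ^ 2 : ℝ) : ℂ) := by
  set c := star ψ ⬝ᵥ φ with hc
  have hψχ : star ψ ⬝ᵥ (φ - c • ψ) = 0 := by
    rw [dotProduct_sub, dotProduct_smul, hψ, ← hc, smul_eq_mul, mul_one, sub_self]
  have hχφ : star (φ - c • ψ) ⬝ᵥ φ = ((1 - ‖c‖ ^ 2 : ℝ) : ℂ) := by
    rw [star_sub, star_smul, sub_dotProduct, smul_dotProduct, hφ, ← hc, smul_eq_mul,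
      Complex.star_def, Complex.conj_mul']
    push_cast; ring
  refine ⟨hψχ, hχφ, ?_⟩
  rw [dotProduct_sub, hχφ, dotProduct_smul, star_dotProduct, hψχ, star_zero, smul_zero, sub_zero]

lemma exists_star_dotProduct_eq {ψ φ : n → ℂ} (hψ : star ψ ⬝ᵥ ψ = 1) (hφ : star φ ⬝ᵥ φ = 1)
    (hψφ : star ψ ⬝ᵥ φ ≠ 0) {p q : ℝ} (hpq : p ^ 2 + q ^ 2 ≤ 1) :
    ∃ ω : n → ℂ, (star ω ⬝ᵥ ω).re ≤ 1 ∧ star ω ⬝ᵥ ψ = p ∧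
      Complex.normSq (star ω ⬝ᵥ φ) =
        (‖star ψ ⬝ᵥ φ‖ * p - √(1 - ‖star ψ ⬝ᵥ φ‖ ^ 2) * q) ^ 2 := by
  obtain ⟨hψχ, hχφ, hχχ⟩ := star_dotProduct_sub_smul_eq hψ hφ
  set c := star ψ ⬝ᵥ φ with hc
  set ν := ‖c‖
  set s := √(1 - ν ^ 2)
  set χ := φ - c • ψ
  have hs : s ^ 2 = 1 - ν ^ 2 :=
    Real.sq_sqrt (by nlinarith [norm_star_dotProduct_le_one hψ hφ, norm_nonneg c])
  rw [← hs] at hχφ hχχ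
  have hχψ : star χ ⬝ᵥ ψ = 0 := by rw [star_dotProduct, hψχ, star_zero]
  have hcc : starRingEnd ℂ c * c = (ν : ℂ) ^ 2 := Complex.conj_mul' c
  -- `r = 0` is Lean's junk value when `s = 0`, and then `ω = p • ψ` indeed works
  set r := q / (ν * s)
  have hr : r * ν * s = q ∨ s = 0 := by
    rcases eq_or_ne s 0 with h | h
    · exact .inr h
    · have hν : ν ≠ 0 := norm_ne_zero_iff.mpr hψφ
      exact .inl (by simp only [r]; field_simp)
  clear_value r
  -- `ψ` turned by `arccos p` away from `φ`, shortened if `p ^ 2 + q ^ 2 < 1`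
  set ω := (p : ℂ) • ψ - ((r : ℂ) * starRingEnd ℂ c) • χ
  have hωω : star ω ⬝ᵥ ω = ((p ^ 2 + (r * ν * s) ^ 2 : ℝ) : ℂ) := by
    simp only [ω, star_sub, star_smul, sub_dotProduct, dotProduct_sub, smul_dotProduct,
      dotProduct_smul, hψ, hψχ, hχψ, hχχ, smul_eq_mul, Complex.star_def, map_mul,
      Complex.conj_ofReal, Complex.conj_conj]
    push_cast
    linear_combination (r : ℂ) ^ 2 * (s : ℂ) ^ 2 * hcc
  have hωφ : star ω ⬝ᵥ φ = c * ((p - r * s ^ 2 : ℝ) : ℂ) := by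
    simp only [ω, star_sub, star_smul, sub_dotProduct, smul_dotProduct, ← hc, hχφ, smul_eq_mul,
      Complex.star_def, map_mul, Complex.conj_ofReal, Complex.conj_conj]
    push_cast
    ring
  refine ⟨ω, ?_, ?_, ?_⟩
  · rw [hωω, Complex.ofReal_re]
    rcases hr with hr | hr
    · rw [hr]; exact hpq
    · rw [hr]; nlinarith
  · simp only [ω, star_sub, star_smul, sub_dotProduct, smul_dotProduct, hψ, hχψ, smul_eq_mul,
      Complex.star_def, Complex.conj_ofReal]
    ring
  · have hrs : ν * (p - r * s ^ 2) = ν * p - s * q := by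
      rcases hr with hr | hr
      · linear_combination -s * hr
      · simp [hr]
    rw [hωφ, Complex.normSq_mul, Complex.normSq_ofReal, Complex.normSq_eq_norm_sq, ← hrs]
    ring

variable [DecidableEq n]

lemma star_mulVec_dotProduct_mulVec {U : Matrix n n ℂ}
    (hU : U ∈ Matrix.unitaryGroup n ℂ) (x y : n → ℂ) :
    star (U *ᵥ x) ⬝ᵥ (U *ᵥ y) = star x ⬝ᵥ y := by
  rw [star_mulVec, ← dotProduct_mulVec, mulVec_mulVec, ← star_eq_conjTranspose,
    mem_unitaryGroup_iff'.mp hU, one_mulVec]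

lemma re_star_dotProduct_one_sub_mulVec (Ω : Matrix n n ℂ) (x : n → ℂ) :
    (star x ⬝ᵥ ((1 - Ω) *ᵥ x)).re = (star x ⬝ᵥ x).re - (star x ⬝ᵥ (Ω *ᵥ x)).re := by
  rw [sub_mulVec, one_mulVec, dotProduct_sub, Complex.sub_re]

lemma re_star_dotProduct_mulVec_mem_Icc {Ω : Matrix n n ℂ} (hΩ : Ω.PosSemidef)
    (hΩ' : (1 - Ω).PosSemidef) {x : n → ℂ} (hx : star x ⬝ᵥ x = 1) :
    (star x ⬝ᵥ (Ω *ᵥ x)).re ∈ Set.Icc 0 1 := by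
  have h := hΩ'.re_dotProduct_nonneg x
  rw [RCLike.re_to_complex, re_star_dotProduct_one_sub_mulVec, hx, Complex.one_re] at h
  exact ⟨hΩ.re_dotProduct_nonneg x, by linarith⟩

lemma norm_star_dotProduct_le_sqrt_add_sqrt {Ω : Matrix n n ℂ} (hΩ : Ω.PosSemidef)
    (hΩ' : (1 - Ω).PosSemidef) (x y : n → ℂ) :
    ‖star x ⬝ᵥ y‖ ≤ √((star x ⬝ᵥ (Ω *ᵥ x)).re * (star y ⬝ᵥ (Ω *ᵥ y)).re) +
      √((star x ⬝ᵥ ((1 - Ω) *ᵥ x)).re * (star y ⬝ᵥ ((1 - Ω) *ᵥ y)).re) := by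
  have hsplit : star x ⬝ᵥ y = star x ⬝ᵥ (Ω *ᵥ y) + star x ⬝ᵥ ((1 - Ω) *ᵥ y) := by
    rw [← dotProduct_add, ← add_mulVec, add_sub_cancel, one_mulVec]
  rw [hsplit]
  exact (norm_add_le _ _).trans (add_le_add
    (PosSemidef.norm_star_dotProduct_mulVec_le_sqrt hΩ x y)
    (PosSemidef.norm_star_dotProduct_mulVec_le_sqrt hΩ' x y))

lemma posSemidef_one_sub_vecMulVec {ω : n → ℂ} (hω : (star ω ⬝ᵥ ω).re ≤ 1) :
    (1 - vecMulVec ω (star ω)).PosSemidef := by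
  refine .of_dotProduct_mulVec_nonneg ?_ fun x => ?_
  · exact isHermitian_one.sub (posSemidef_vecMulVec_self_star ω).isHermitian
  · rw [sub_mulVec, one_mulVec, dotProduct_sub, star_dotProduct_vecMulVec_mulVec,
      Complex.nonneg_iff, Complex.sub_re, Complex.sub_im, im_star_dotProduct_self,
      Complex.ofReal_re, Complex.ofReal_im, Complex.normSq_eq_norm_sq]
    refine ⟨sub_nonneg.mpr ?_, by simp⟩
    calc ‖star ω ⬝ᵥ x‖ ^ 2 ≤ (star ω ⬝ᵥ ω).re * (star x ⬝ᵥ x).re := norm_star_dotProduct_sq_le ω x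
      _ ≤ (star x ⬝ᵥ x).re :=
        mul_le_of_le_one_left (Complex.nonneg_iff.mp (dotProduct_star_self_nonneg x)).1 hω

end DotProduct

-- `cos (θ + α)` for `cos θ = t` and `cos α = √(1 - δ)`
noncomputable def optimalOverlap (δ t : ℝ) : ℝ := t * √(1 - δ) - √(1 - t ^ 2) * √δ

-- With `(p, r) = (cos α, sin α)` and `(q, s) = (cos β, sin β)`:
-- `cos θ ≤ cos (α - β)` implies `cos (θ + α) ≤ cos β`.
lemma mul_sub_sqrt_mul_le {ν p q r s : ℝ} (hp : 0 ≤ p) (hr : 0 ≤ r) (hpr : p ^ 2 + r ^ 2 = 1)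
    (hqs : q ^ 2 + s ^ 2 = 1) (hν : 0 ≤ ν) (h : ν ≤ p * q + r * s) :
    ν * p - √(1 - ν ^ 2) * r ≤ q := by
  have hlag : (p * s - r * q) ^ 2 = 1 - (p * q + r * s) ^ 2 := by
    linear_combination (p ^ 2 + r ^ 2) * hqs + hpr
  have hm : p * s - r * q ≤ √(1 - ν ^ 2) :=
    Real.le_sqrt_of_sq_le (by rw [hlag]; nlinarith)
  calc ν * p - √(1 - ν ^ 2) * r ≤ (p * q + r * s) * p - (p * s - r * q) * r := by
        gcongr
    _ = q := by linear_combination q * hpr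

lemma optimalOverlap_le_sqrt {δ t ν a b : ℝ} (ht : 0 ≤ t) (htν : t ≤ ν) (ha0 : 0 ≤ a)
    (ha : 1 - δ ≤ a) (ha1 : a ≤ 1) (hb0 : 0 ≤ b) (hb1 : b ≤ 1)
    (h : ν ≤ √(a * b) + √((1 - a) * (1 - b))) :
    optimalOverlap δ t ≤ √b := by
  rw [Real.sqrt_mul ha0, Real.sqrt_mul (by linarith)] at h
  calc optimalOverlap δ t ≤ ν * √a - √(1 - ν ^ 2) * √(1 - a) := by
        unfold optimalOverlap
        gcongr ?_ * √?_ - √?_ * √?_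
        · linarith
        · nlinarith
        · linarith
    _ ≤ √b := mul_sub_sqrt_mul_le (Real.sqrt_nonneg a) (Real.sqrt_nonneg _)
        (by rw [Real.sq_sqrt ha0, Real.sq_sqrt (by linarith)]; ring)
        (by rw [Real.sq_sqrt hb0, Real.sq_sqrt (by linarith)]; ring) (ht.trans htν) h

lemma optimalOverlap_nonneg {δ t : ℝ} (hδ0 : 0 ≤ δ) (ht : √δ < t) (ht1 : t ≤ 1) :
    0 ≤ optimalOverlap δ t := by
  have ht0 : 0 ≤ t := (Real.sqrt_nonneg δ).trans ht.le
  have hδt : δ ≤ t ^ 2 := by nlinarith [Real.sq_sqrt hδ0, Real.sqrt_nonneg δ]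
  have hleft : t * √(1 - δ) = √(t ^ 2 * (1 - δ)) := by
    rw [Real.sqrt_mul (sq_nonneg t), Real.sqrt_sq ht0]
  rw [optimalOverlap, sub_nonneg, hleft, ← Real.sqrt_mul (by nlinarith)]
  exact Real.sqrt_le_sqrt (by nlinarith)

section Nu

variable {d : ℕ} (U : Matrix (Fin d) (Fin d) ℂ)

lemma nu_nonneg : 0 ≤ nu U :=
  Real.sInf_nonneg (by rintro _ ⟨_, _, rfl⟩; exact norm_nonneg _)

lemma nu_le_norm {ψ : Fin d → ℂ} (hψ : star ψ ⬝ᵥ ψ = 1) : nu U ≤ ‖star ψ ⬝ᵥ (U *ᵥ ψ)‖ :=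
  csInf_le ⟨0, by rintro _ ⟨_, _, rfl⟩; exact norm_nonneg _⟩ ⟨ψ, hψ, rfl⟩

lemma exists_norm_eq_nu (h : ∃ ψ : Fin d → ℂ, star ψ ⬝ᵥ ψ = 1) :
    ∃ ψ : Fin d → ℂ, star ψ ⬝ᵥ ψ = 1 ∧ ‖star ψ ⬝ᵥ (U *ᵥ ψ)‖ = nu U := by
  obtain ⟨ψ, hψ, hmin⟩ := isCompact_setOf_star_dotProduct_self_eq_one.exists_isMinOn h
    (f := fun ψ : Fin d → ℂ => ‖star ψ ⬝ᵥ (U *ᵥ ψ)‖) (by fun_prop)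
  refine ⟨ψ, hψ, le_antisymm ?_ (nu_le_norm U hψ)⟩
  exact le_csInf ⟨_, ψ, hψ, rfl⟩ (by rintro _ ⟨χ, hχ, rfl⟩; exact hmin hχ)

lemma nu_eq_zero_of_not_exists (h : ¬∃ ψ : Fin d → ℂ, star ψ ⬝ᵥ ψ = 1) : nu U = 0 := by
  unfold nu
  convert Real.sInf_empty
  exact Set.eq_empty_iff_forall_notMem.mpr (by rintro _ ⟨ψ, hψ, -⟩; exact h ⟨ψ, hψ⟩)

end Nu

def typeIIErrors {d : ℕ} (U : Matrix (Fin d) (Fin d) ℂ) (δ : ℝ) : Set ℝ :=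
  {x : ℝ | ∃ (ψ : Fin d → ℂ) (Ω : Matrix (Fin d) (Fin d) ℂ),
    star ψ ⬝ᵥ ψ = 1 ∧ Ω.PosSemidef ∧ (1 - Ω).PosSemidef ∧
    (star ψ ⬝ᵥ ((1 - Ω) *ᵥ ψ)).re ≤ δ ∧
    x = (star (U *ᵥ ψ) ⬝ᵥ (Ω *ᵥ (U *ᵥ ψ))).re}

section TypeIIErrors

variable {d : ℕ} {U : Matrix (Fin d) (Fin d) ℂ} {δ : ℝ}

lemma nonneg_of_mem_typeIIErrors {x : ℝ} (hx : x ∈ typeIIErrors U δ) : 0 ≤ x := by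
  obtain ⟨ψ, Ω, -, hΩ, -, -, rfl⟩ := hx
  simpa using hΩ.re_dotProduct_nonneg (U *ᵥ ψ)

lemma typeIIErrors_eq_empty (h : ¬∃ ψ : Fin d → ℂ, star ψ ⬝ᵥ ψ = 1) :
    typeIIErrors U δ = ∅ :=
  Set.eq_empty_iff_forall_notMem.mpr (by rintro _ ⟨ψ, _, hψ, -⟩; exact h ⟨ψ, hψ⟩)

lemma optimalOverlap_nu_le_sqrt_of_mem_typeIIErrors (hU : U ∈ Matrix.unitaryGroup (Fin d) ℂ)
    {x : ℝ} (hx : x ∈ typeIIErrors U δ) : optimalOverlap δ (nu U) ≤ √x := by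
  obtain ⟨ψ, Ω, hψ, hΩ, hΩ', hI, rfl⟩ := hx
  have hφ : star (U *ᵥ ψ) ⬝ᵥ (U *ᵥ ψ) = 1 := (star_mulVec_dotProduct_mulVec hU ψ ψ).trans hψ
  have hfid := norm_star_dotProduct_le_sqrt_add_sqrt hΩ hΩ' ψ (U *ᵥ ψ)
  rw [re_star_dotProduct_one_sub_mulVec, re_star_dotProduct_one_sub_mulVec, hψ, hφ,
    Complex.one_re] at hfid
  rw [re_star_dotProduct_one_sub_mulVec, hψ, Complex.one_re] at hI
  obtain ⟨ha0, ha1⟩ := re_star_dotProduct_mulVec_mem_Icc hΩ hΩ' hψ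
  obtain ⟨hb0, hb1⟩ := re_star_dotProduct_mulVec_mem_Icc hΩ hΩ' hφ
  exact optimalOverlap_le_sqrt (nu_nonneg U) (nu_le_norm U hψ) ha0 (by linarith) ha1 hb0 hb1
    hfid

lemma zero_mem_typeIIErrors (hU : U ∈ Matrix.unitaryGroup (Fin d) ℂ) (hδ : 0 ≤ δ)
    {ψ : Fin d → ℂ} (hψ : star ψ ⬝ᵥ ψ = 1) (hν : ‖star ψ ⬝ᵥ (U *ᵥ ψ)‖ ≤ √δ) :
    0 ∈ typeIIErrors U δ := by
  have hφ : star (U *ᵥ ψ) ⬝ᵥ (U *ᵥ ψ) = 1 := (star_mulVec_dotProduct_mulVec hU ψ ψ).trans hψ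
  have hsub : 1 - (1 - vecMulVec (U *ᵥ ψ) (star (U *ᵥ ψ))) =
      vecMulVec (U *ᵥ ψ) (star (U *ᵥ ψ)) := sub_sub_cancel 1 _
  refine ⟨ψ, _, hψ, posSemidef_one_sub_vecMulVec (by rw [hφ, Complex.one_re]), ?_, ?_, ?_⟩
  · rw [hsub]; exact posSemidef_vecMulVec_self_star _
  · rw [hsub, star_dotProduct_vecMulVec_mulVec, Complex.ofReal_re, Complex.normSq_eq_norm_sq,
      star_dotProduct, norm_star]
    exact (Real.le_sqrt (norm_nonneg _) hδ).mp hν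
  · rw [re_star_dotProduct_one_sub_mulVec, star_dotProduct_vecMulVec_mulVec, hφ]
    simp

lemma optimalOverlap_sq_mem_typeIIErrors (hU : U ∈ Matrix.unitaryGroup (Fin d) ℂ) (hδ0 : 0 ≤ δ)
    (hδ1 : δ ≤ 1) {ψ : Fin d → ℂ} (hψ : star ψ ⬝ᵥ ψ = 1) (hν : star ψ ⬝ᵥ (U *ᵥ ψ) ≠ 0) :
    optimalOverlap δ ‖star ψ ⬝ᵥ (U *ᵥ ψ)‖ ^ 2 ∈ typeIIErrors U δ := by
  have hφ : star (U *ᵥ ψ) ⬝ᵥ (U *ᵥ ψ) = 1 := (star_mulVec_dotProduct_mulVec hU ψ ψ).trans hψ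
  obtain ⟨ω, hω, hωψ, hωφ⟩ := exists_star_dotProduct_eq hψ hφ hν (p := √(1 - δ)) (q := √δ)
    (by rw [Real.sq_sqrt hδ0, Real.sq_sqrt (by linarith)]; linarith)
  refine ⟨ψ, vecMulVec ω (star ω), hψ, posSemidef_vecMulVec_self_star ω,
    posSemidef_one_sub_vecMulVec hω, ?_, ?_⟩
  · rw [re_star_dotProduct_one_sub_mulVec, star_dotProduct_vecMulVec_mulVec, hωψ, hψ,
      Complex.normSq_ofReal, Real.mul_self_sqrt (by linarith)]
    simp
  · rw [star_dotProduct_vecMulVec_mulVec, Complex.ofReal_re, hωφ, optimalOverlap]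

end TypeIIErrors

end UnitaryCertification

open UnitaryCertification

theorem stmt8 {d : ℕ} (U : Matrix (Fin d) (Fin d) ℂ)
    (hU : U ∈ Matrix.unitaryGroup (Fin d) ℂ) (δ : ℝ)
    (hδ : δ ∈ Set.Icc (0 : ℝ) 1) :
    (nu U ≤ Real.sqrt δ →
      sInf {x : ℝ | ∃ (ψ : Fin d → ℂ) (Ω : Matrix (Fin d) (Fin d) ℂ),
          star ψ ⬝ᵥ ψ = 1 ∧ Ω.PosSemidef ∧ (1 - Ω).PosSemidef ∧
          (star ψ ⬝ᵥ ((1 - Ω) *ᵥ ψ)).re ≤ δ ∧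
          x = (star (U *ᵥ ψ) ⬝ᵥ (Ω *ᵥ (U *ᵥ ψ))).re} = 0) ∧
    (Real.sqrt δ < nu U →
      sInf {x : ℝ | ∃ (ψ : Fin d → ℂ) (Ω : Matrix (Fin d) (Fin d) ℂ),
          star ψ ⬝ᵥ ψ = 1 ∧ Ω.PosSemidef ∧ (1 - Ω).PosSemidef ∧
          (star ψ ⬝ᵥ ((1 - Ω) *ᵥ ψ)).re ≤ δ ∧
          x = (star (U *ᵥ ψ) ⬝ᵥ (Ω *ᵥ (U *ᵥ ψ))).re} =
        (nu U * Real.sqrt (1 - δ) - Real.sqrt (1 - nu U ^ 2) * Real.sqrt δ) ^ 2) := by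
  obtain ⟨hδ0, hδ1⟩ := hδ
  change (_ → sInf (typeIIErrors U δ) = 0) ∧
    (_ → sInf (typeIIErrors U δ) = optimalOverlap δ (nu U) ^ 2)
  have hbdd : BddBelow (typeIIErrors U δ) := ⟨0, fun _ => nonneg_of_mem_typeIIErrors⟩
  by_cases hunit : ∃ ψ : Fin d → ℂ, star ψ ⬝ᵥ ψ = 1
  swap
  · rw [typeIIErrors_eq_empty hunit, Real.sInf_empty, nu_eq_zero_of_not_exists U hunit]
    exact ⟨fun _ => rfl, fun h => absurd h (Real.sqrt_nonneg δ).not_gt⟩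
  obtain ⟨ψ, hψ, hν⟩ := exists_norm_eq_nu U hunit
  refine ⟨fun hle => ?_, fun hlt => ?_⟩
  · exact le_antisymm (csInf_le hbdd (zero_mem_typeIIErrors hU hδ0 hψ (hν ▸ hle)))
      (Real.sInf_nonneg fun _ => nonneg_of_mem_typeIIErrors)
  · have hpos : 0 ≤ optimalOverlap δ (nu U) :=
      optimalOverlap_nonneg hδ0 hlt (hν ▸ norm_star_dotProduct_le_one hψ
        ((star_mulVec_dotProduct_mulVec hU ψ ψ).trans hψ))
    have hmem := optimalOverlap_sq_mem_typeIIErrors hU hδ0 hδ1 hψ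
      (norm_pos_iff.mp (hν ▸ (Real.sqrt_nonneg δ).trans_lt hlt))
    rw [hν] at hmem
    refine le_antisymm (csInf_le hbdd hmem) (le_csInf ⟨_, hmem⟩ fun x hx => ?_)
    exact (Real.le_sqrt hpos (nonneg_of_mem_typeIIErrors hx)).mp
      (optimalOverlap_nu_le_sqrt_of_mem_typeIIErrors hU hx)
end

section
/- Let ψ, φ be unit vectors in ℂ^d with overlap a = |⟨ψ|φ⟩| < 1, and let δ ∈ (0,1]. For any N ≥ ⌈log(√δ)/log(a)⌉ (so that a^N ≤ √δ), there exists an effect Ω on (ℂ^d)^{⊗N} with 0 ≤ Ω ≤ I such that ⟨ψ^{⊗N}|Ω|ψ^{⊗N}⟩ ≥ 1 − δ and ⟨φ^{⊗N}|Ω|φ^{⊗N}⟩ = 0. -/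
open Matrix
open scoped ComplexOrder

/-- The `N`-fold tensor power of a vector in `ℂ^d`. -/
noncomputable def tpow {d : ℕ} (ψ : Fin d → ℂ) (N : ℕ) : (Fin N → Fin d) → ℂ :=
  fun f => ∏ k, ψ (f k)

/-!
Let `Φ = φ^{⊗N}` and `Ψ = ψ^{⊗N}`. The effect `Ω = 1 - |Φ⟩⟨Φ|` is the projection onto the
orthogonal complement of `Φ`, so it annihilates `Φ` and accepts `Ψ` with probability
`1 - |⟨Φ|Ψ⟩|² = 1 - a^{2N} ≥ 1 - δ`, because overlaps of tensor powers are powers of overlaps.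
-/

open scoped MatrixOrder

namespace Matrix

variable {n 𝕜 : Type*} [Fintype n] [RCLike 𝕜]

lemma isStarProjection_vecMulVec_self_star {v : n → 𝕜} (hv : star v ⬝ᵥ v = 1) :
    IsStarProjection (vecMulVec v (star v)) where
  isIdempotentElem := by
    rw [IsIdempotentElem, vecMulVec_mul_vecMulVec, hv, one_smul]
  isSelfAdjoint := by
    rw [IsSelfAdjoint, star_eq_conjTranspose, conjTranspose_vecMulVec, star_star]

lemma star_dotProduct_vecMulVec_self_star_mulVec (v x : n → 𝕜) :
    star x ⬝ᵥ (vecMulVec v (star v) *ᵥ x) = (‖star v ⬝ᵥ x‖ : 𝕜) ^ 2 := by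
  rw [vecMulVec_mulVec, op_smul_eq_smul, dotProduct_smul, smul_eq_mul, star_dotProduct x v,
    ← RCLike.mul_conj]
  rfl

variable [DecidableEq n]

lemma star_dotProduct_one_sub_vecMulVec_self_star_mulVec {v x : n → 𝕜} (hx : star x ⬝ᵥ x = 1) :
    star x ⬝ᵥ ((1 - vecMulVec v (star v)) *ᵥ x) = 1 - (‖star v ⬝ᵥ x‖ : 𝕜) ^ 2 := by
  rw [sub_mulVec, one_mulVec, dotProduct_sub, hx, star_dotProduct_vecMulVec_self_star_mulVec]

end Matrix

lemma star_tpow {d : ℕ} (ψ : Fin d → ℂ) (N : ℕ) : star (tpow ψ N) = tpow (star ψ) N := by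
  ext f
  simp [tpow, star_prod]

lemma tpow_dotProduct_tpow {d : ℕ} (ψ χ : Fin d → ℂ) (N : ℕ) :
    tpow ψ N ⬝ᵥ tpow χ N = (ψ ⬝ᵥ χ) ^ N := by
  simp only [dotProduct, tpow, ← Finset.prod_mul_distrib]
  rw [← Fin.prod_const, Fintype.prod_sum]

lemma star_tpow_dotProduct_tpow {d : ℕ} (ψ χ : Fin d → ℂ) (N : ℕ) :
    star (tpow ψ N) ⬝ᵥ tpow χ N = (star ψ ⬝ᵥ χ) ^ N := by
  rw [star_tpow, tpow_dotProduct_tpow]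

theorem stmt14_general {d : ℕ} (ψ φ : Fin d → ℂ) (a δ : ℝ) (N : ℕ)
    (hψ : star ψ ⬝ᵥ ψ = 1) (hφ : star φ ⬝ᵥ φ = 1)
    (ha : a = ‖star ψ ⬝ᵥ φ‖)
    (hδ : δ ∈ Set.Ioc (0 : ℝ) 1)
    (hN : a ^ N ≤ Real.sqrt δ) :
    ∃ Ω : Matrix (Fin N → Fin d) (Fin N → Fin d) ℂ,
      Ω.PosSemidef ∧ (1 - Ω).PosSemidef ∧
      1 - δ ≤ (star (tpow ψ N) ⬝ᵥ (Ω *ᵥ tpow ψ N)).re ∧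
      star (tpow φ N) ⬝ᵥ (Ω *ᵥ tpow φ N) = 0 := by
  have hΨ : star (tpow ψ N) ⬝ᵥ tpow ψ N = 1 := by rw [star_tpow_dotProduct_tpow, hψ, one_pow]
  have hΦ : star (tpow φ N) ⬝ᵥ tpow φ N = 1 := by rw [star_tpow_dotProduct_tpow, hφ, one_pow]
  have hP := isStarProjection_vecMulVec_self_star hΦ
  have hoverlap : ‖star (tpow φ N) ⬝ᵥ tpow ψ N‖ = a ^ N := by
    rw [star_tpow_dotProduct_tpow, norm_pow, star_dotProduct φ ψ, norm_star, ha]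
  have hδa : (a ^ N) ^ 2 ≤ δ :=
    (Real.le_sqrt (ha ▸ by positivity) hδ.1.le).mp hN
  refine ⟨1 - vecMulVec (tpow φ N) (star (tpow φ N)), hP.one_sub_nonneg.posSemidef,
    by simpa using hP.nonneg.posSemidef, ?_, ?_⟩
  · rw [star_dotProduct_one_sub_vecMulVec_self_star_mulVec hΨ, hoverlap]
    simpa [← Complex.ofReal_pow] using sub_le_sub_left hδa 1
  · rw [star_dotProduct_one_sub_vecMulVec_self_star_mulVec hΦ, hΦ]
    simp

theorem stmt14 {d : ℕ} (ψ φ : Fin d → ℂ) (a δ : ℝ) (N : ℕ)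
    (hψ : star ψ ⬝ᵥ ψ = 1) (hφ : star φ ⬝ᵥ φ = 1)
    (ha : a = ‖star ψ ⬝ᵥ φ‖) (ha1 : a < 1)
    (hδ : δ ∈ Set.Ioc (0 : ℝ) 1)
    (hN : a ^ N ≤ Real.sqrt δ) :
    ∃ Ω : Matrix (Fin N → Fin d) (Fin N → Fin d) ℂ,
      Ω.PosSemidef ∧ (1 - Ω).PosSemidef ∧
      1 - δ ≤ (star (tpow ψ N) ⬝ᵥ (Ω *ᵥ tpow ψ N)).re ∧
      star (tpow φ N) ⬝ᵥ (Ω *ᵥ tpow φ N) = 0 :=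
  stmt14_general ψ φ a δ N hψ hφ ha hδ hN
end
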